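/- arXiv:1105.5438 — 3 statements merged into one kernel-verified Lean document; each statement's English description precedes it below -/
import Mathlib

section
/- Let Λ_d = {λ ∈ ℝ^d : λᵢ ≥ 0, ∑ᵢ λᵢ = 1} be the d-dimensional simplex, P a set (of probability distributions), and T₁,…,T_d : P → ℝ functions such that the set A = {a ∈ ℝ^d : ∃ p ∈ P, aᵢ ≤ Tᵢ(p) for all i} is convex. Then sup_{p ∈ P} min_{λ ∈ Λ_d} ∑ᵢ λᵢ Tᵢ(p) = min_{λ ∈ Λ_d} sup_{p ∈ P} ∑ᵢ λᵢ Tᵢ(p), assuming both sides are finite. -/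
/-!
Weak duality gives `≤`. For the converse let `c` be the sup-min. If `x > c` coordinatewise and
`x ≤ T p`, then every convex combination of the `T i p` exceeds `c`, which is impossible; so the
open orthant above `c` misses the convex set `A`. A hyperplane separating them has a normal with
nonnegative coordinates, because the orthant is closed upwards, and the normalized normal is a
`λ ∈ Λ_d` with `∑ λᵢ Tᵢ(p) ≤ c` for every `p`.
-/

open Set Finset

section

variable {ι : Type*} [Fintype ι]

lemma le_sum_mul_of_mem_stdSimplex {l y : ι → ℝ} {m : ℝ} (hl : l ∈ stdSimplex ℝ ι)
    (h : ∀ i, m ≤ y i) : m ≤ ∑ i, l i * y i :=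
  calc m = ∑ i, l i * m := by rw [← Finset.sum_mul, hl.2, one_mul]
    _ ≤ ∑ i, l i * y i := sum_le_sum fun i _ => mul_le_mul_of_nonneg_left (h i) (hl.1 i)

lemma bddBelow_range_stdSimplex_sum_mul [Nonempty ι] (y : ι → ℝ) :
    BddBelow (range fun l : stdSimplex ℝ ι => ∑ i, (l : ι → ℝ) i * y i) :=
  ⟨univ.inf' univ_nonempty y, by
    rintro _ ⟨l, rfl⟩
    exact le_sum_mul_of_mem_stdSimplex l.2 fun i => inf'_le _ (mem_univ i)⟩

lemma lt_iInf_stdSimplex_sum_mul [Nonempty ι] {y : ι → ℝ} {c : ℝ} (h : ∀ i, c < y i) :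
    c < ⨅ l : stdSimplex ℝ ι, ∑ i, (l : ι → ℝ) i * y i :=
  calc c < univ.inf' univ_nonempty y := (lt_inf'_iff _).2 fun i _ => h i
    _ ≤ _ := le_ciInf fun l => le_sum_mul_of_mem_stdSimplex l.2 fun i => inf'_le _ (mem_univ i)

lemma LinearMap.apply_eq_sum_map_single_mul [DecidableEq ι] (f : (ι → ℝ) →ₗ[ℝ] ℝ) (x : ι → ℝ) :
    f x = ∑ i, f (Pi.single i 1) * x i := by
  conv_lhs => rw [← Finset.univ_sum_single x]
  refine (map_sum f _ _).trans (sum_congr rfl fun i _ => ?_)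
  rw [mul_comm, ← smul_eq_mul, ← map_smul, ← Pi.single_smul', smul_eq_mul, mul_one]

lemma nonneg_of_forall_mem_orthant_lt_sum_mul {v : ι → ℝ} {c k : ℝ}
    (h : ∀ x ∈ univ.pi fun _ : ι => Ioi c, k < ∑ i, v i * x i) (i : ι) : 0 ≤ v i := by
  classical
  by_contra! hi
  obtain ⟨t, ht0, ht⟩ : ∃ t : ℝ, 0 ≤ t ∧ v i * t ≤ k - (c + 1) * ∑ j, v j :=
    ⟨|(c + 1) * ∑ j, v j - k| / -v i, div_nonneg (abs_nonneg _) (neg_nonneg.2 hi.le), by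
      rw [div_neg, mul_neg, mul_div_cancel₀ _ hi.ne, neg_le, neg_sub]; exact le_abs_self _⟩
  have hx : (fun j => c + 1 + (Pi.single i t : ι → ℝ) j) ∈ univ.pi fun _ : ι => Ioi c := by
    intro j _
    have : 0 ≤ (Pi.single i t : ι → ℝ) j := by rw [Pi.single_apply]; split_ifs <;> simp [ht0]
    simp only [Set.mem_Ioi]; linarith
  have hsum : ∑ j, v j * (c + 1 + (Pi.single i t : ι → ℝ) j) = (c + 1) * ∑ j, v j + v i * t := by
    simp [mul_add, sum_add_distrib, mul_sum, Pi.single_apply, mul_comm]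
  linarith [h _ hx]

lemma le_mul_sum_of_forall_mem_orthant_lt_sum_mul {v : ι → ℝ} {c k : ℝ}
    (h : ∀ x ∈ univ.pi fun _ : ι => Ioi c, k < ∑ i, v i * x i) : k ≤ c * ∑ i, v i := by
  have hsub : univ.pi (fun _ : ι => Ioi c) ⊆ {x | k ≤ ∑ i, v i * x i} := fun x hx => (h x hx).le
  have hc : (fun _ => c) ∈ closure (univ.pi fun _ : ι => Ioi c) := by
    rw [closure_pi_set, closure_Ioi]; simp
  simpa [mul_comm, Finset.mul_sum] using
    closure_minimal hsub (isClosed_le continuous_const (by fun_prop)) hc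

theorem exists_mem_stdSimplex_forall_sum_mul_le {A : Set (ι → ℝ)} (hA : Convex ℝ A)
    (hA₀ : A.Nonempty) {c : ℝ} (hdisj : Disjoint (univ.pi fun _ : ι => Ioi c) A) :
    ∃ w ∈ stdSimplex ℝ ι, ∀ a ∈ A, ∑ i, w i * a i ≤ c := by
  classical
  obtain ⟨f, u, hf_orthant, hfA⟩ := geometric_hahn_banach_open
    (convex_pi fun _ _ => convex_Ioi c) (isOpen_set_pi finite_univ fun _ _ => isOpen_Ioi) hA hdisj
  set v : ι → ℝ := fun i => -f (Pi.single i 1)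
  have hf x : f x = -∑ i, v i * x i := by
    simpa [v] using f.toLinearMap.apply_eq_sum_map_single_mul x
  have h_orthant : ∀ x ∈ univ.pi fun _ : ι => Ioi c, -u < ∑ i, v i * x i := fun x hx => by
    linarith [hf_orthant x hx, hf x]
  have h_A : ∀ a ∈ A, ∑ i, v i * a i ≤ -u := fun a ha => by linarith [hfA a ha, hf a]
  have hv := nonneg_of_forall_mem_orthant_lt_sum_mul h_orthant
  have hu := le_mul_sum_of_forall_mem_orthant_lt_sum_mul h_orthant
  have hS : 0 < ∑ i, v i := by
    refine (sum_nonneg fun i _ => hv i).lt_of_ne fun hS => ?_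
    have hv0 i : v i = 0 := (sum_eq_zero_iff_of_nonneg fun i _ => hv i).1 hS.symm i (mem_univ i)
    obtain ⟨a, ha⟩ := hA₀
    linarith [h_A a ha, h_orthant (fun _ => c + 1) fun _ _ => by simp,
      show ∑ i, v i * a i = 0 by simp [hv0], show ∑ i, v i * (c + 1) = 0 by simp [hv0]]
  refine ⟨fun i => v i / ∑ j, v j, ⟨fun i => div_nonneg (hv i) hS.le, ?_⟩, fun a ha => ?_⟩
  · rw [← sum_div, div_self hS.ne']
  · simp_rw [div_mul_eq_mul_div, ← sum_div, div_le_iff₀ hS]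
    linarith [h_A a ha]

end

/-- Corollary of Terkelsen's min-max theorem: if the down-set `A` determined by the
functionals `T i` is convex, then sup-min equals min-sup over the simplex,
assuming both sides are finite (the relevant families are bounded above). -/
theorem minimax_simplex {d : ℕ} (hd : 0 < d) {P : Type*} [Nonempty P]
    (T : Fin d → P → ℝ)
    (hA : Convex ℝ {a : Fin d → ℝ | ∃ p : P, ∀ i : Fin d, a i ≤ T i p})
    (hfin₁ : BddAbove (Set.range fun p : P =>
      ⨅ l : stdSimplex ℝ (Fin d), ∑ i, (l : Fin d → ℝ) i * T i p))
    (hfin₂ : ∀ l : stdSimplex ℝ (Fin d),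
      BddAbove (Set.range fun p : P => ∑ i, (l : Fin d → ℝ) i * T i p)) :
    (⨆ p : P, ⨅ l : stdSimplex ℝ (Fin d), ∑ i, (l : Fin d → ℝ) i * T i p)
      = ⨅ l : stdSimplex ℝ (Fin d), ⨆ p : P, ∑ i, (l : Fin d → ℝ) i * T i p := by
  have : Nonempty (Fin d) := ⟨⟨0, hd⟩⟩
  set c := ⨆ p : P, ⨅ l : stdSimplex ℝ (Fin d), ∑ i, (l : Fin d → ℝ) i * T i p
  have hle (l : stdSimplex ℝ (Fin d)) : c ≤ ⨆ p : P, ∑ i, (l : Fin d → ℝ) i * T i p :=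
    ciSup_mono (hfin₂ l) fun p => ciInf_le (bddBelow_range_stdSimplex_sum_mul _) l
  refine le_antisymm (le_ciInf hle) ?_
  have hdisj : Disjoint (univ.pi fun _ => Ioi c) {a : Fin d → ℝ | ∃ p : P, ∀ i, a i ≤ T i p} :=
    Set.disjoint_left.2 fun x hx ⟨p, hp⟩ => (le_ciSup hfin₁ p).not_gt
      (lt_iInf_stdSimplex_sum_mul fun i => (hx i (mem_univ i)).trans_le (hp i))
  obtain ⟨w, hw, hwA⟩ := exists_mem_stdSimplex_forall_sum_mul_le hA
    ⟨_, Classical.arbitrary P, fun i => le_rfl⟩ hdisj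
  calc (⨅ l : stdSimplex ℝ (Fin d), ⨆ p : P, ∑ i, (l : Fin d → ℝ) i * T i p)
      ≤ ⨆ p : P, ∑ i, w i * T i p := ciInf_le ⟨c, forall_mem_range.2 hle⟩ ⟨w, hw⟩
    _ ≤ c := ciSup_le fun p => hwA _ ⟨p, fun i => le_rfl⟩
end

section
/- Let U, V, W, Y, Z be finite-valued random variables on a probability space. Then I(W;Z) + I(U;Y|W) + I(V;Z|W) - I(U;V|W) ≤ I(V,W;Z) + I(U;Y|V,W), where I denotes (conditional) mutual information. -/
open scoped BigOperators Classical

noncomputable section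

/-- Probability that the random variable `f` takes the value `a` under the pmf `μ`. -/
def prob {Ω A : Type*} [Fintype Ω] (μ : Ω → ℝ) (f : Ω → A) (a : A) : ℝ :=
  ∑ ω, if f ω = a then μ ω else 0

/-- Shannon entropy (natural log) of the finite-valued random variable `f`. -/
def ent {Ω A : Type*} [Fintype Ω] [Fintype A] (μ : Ω → ℝ) (f : Ω → A) : ℝ :=
  ∑ a, Real.negMulLog (prob μ f a)

/-- Conditional entropy `H(f | g)`. -/
def condEnt {Ω A B : Type*} [Fintype Ω] [Fintype A] [Fintype B]
    (μ : Ω → ℝ) (f : Ω → A) (g : Ω → B) : ℝ :=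
  ent μ (fun ω => (f ω, g ω)) - ent μ g

/-- Mutual information `I(f ; g)`. -/
def mutInfo {Ω A B : Type*} [Fintype Ω] [Fintype A] [Fintype B]
    (μ : Ω → ℝ) (f : Ω → A) (g : Ω → B) : ℝ :=
  ent μ f + ent μ g - ent μ (fun ω => (f ω, g ω))

/-- Conditional mutual information `I(f ; g | h)`. -/
def condMutInfo {Ω A B C : Type*} [Fintype Ω] [Fintype A] [Fintype B] [Fintype C]
    (μ : Ω → ℝ) (f : Ω → A) (g : Ω → B) (h : Ω → C) : ℝ :=
  ent μ (fun ω => (f ω, h ω)) + ent μ (fun ω => (g ω, h ω))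
    - ent μ (fun ω => (f ω, g ω, h ω)) - ent μ h

/-- `f → g → h` is a Markov chain under `μ`. -/
def IsMarkov {Ω A B C : Type*} [Fintype Ω] (μ : Ω → ℝ)
    (f : Ω → A) (g : Ω → B) (h : Ω → C) : Prop :=
  ∀ (a : A) (b : B) (c : C),
    prob μ (fun ω => (f ω, g ω, h ω)) (a, b, c) * prob μ g b
      = prob μ (fun ω => (f ω, g ω)) (a, b) * prob μ (fun ω => (g ω, h ω)) (b, c)

/-- A pmf: nonnegative and summing to one. -/
def IsPmf {Ω : Type*} [Fintype Ω] (μ : Ω → ℝ) : Prop :=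
  (∀ ω, 0 ≤ μ ω) ∧ ∑ ω, μ ω = 1

/- Auxiliary lemmas -/
lemma prob_nonneg {Ω A : Type*} [Fintype Ω] (μ : Ω → ℝ) (hμ : ∀ ω, 0 ≤ μ ω)
    (f : Ω → A) (a : A) : 0 ≤ prob μ f a := by
  apply Finset.sum_nonneg
  intro ω _
  split
  · exact hμ ω
  · exact le_rfl

lemma ent_comp {Ω A B : Type*} [Fintype Ω] [Fintype A] [Fintype B] (μ : Ω → ℝ)
    (π : A → B) (hπ : Function.Injective π) (f : Ω → A) (g : Ω → B)
    (hfg : ∀ ω, g ω = π (f ω)) : ent μ g = ent μ f := by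
  have hp : ∀ a, prob μ g (π a) = prob μ f a := by
    intro a
    unfold prob
    refine Finset.sum_congr rfl fun ω _ => ?_
    rw [hfg ω]
    simp [hπ.eq_iff]
  have h0 : ∀ b, b ∉ Finset.univ.image π → prob μ g b = 0 := by
    intro b hb
    unfold prob
    refine Finset.sum_eq_zero fun ω _ => ?_
    rw [hfg ω, if_neg]
    intro h
    exact hb (h ▸ Finset.mem_image_of_mem π (Finset.mem_univ _))
  unfold ent
  rw [← Finset.sum_subset (Finset.subset_univ (Finset.univ.image π))
      (fun b _ hb => by rw [h0 b hb, Real.negMulLog_zero]),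
    Finset.sum_image (fun a _ a' _ h => hπ h)]
  exact Finset.sum_congr rfl fun a _ => by rw [hp a]

lemma log_ineq {p q : ℝ} (hp : 0 ≤ p) (hq : 0 ≤ q) (hpq : q = 0 → p = 0) :
    p - q ≤ p * (Real.log p - Real.log q) := by
  rcases eq_or_lt_of_le hp with h | h
  · simp [← h, neg_nonpos, hq]
  · have hq' : 0 < q := by
      rcases eq_or_lt_of_le hq with h' | h'
      · exact absurd (hpq h'.symm) h.ne'
      · exact h'
    have := Real.log_le_sub_one_of_pos (show 0 < q / p from div_pos hq' h)
    rw [Real.log_div (ne_of_gt hq') (ne_of_gt h)] at this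
    have h2 := mul_le_mul_of_nonneg_left this h.le
    have h3 : p * (q / p - 1) = q - p := by field_simp
    rw [h3] at h2
    nlinarith
lemma sum_rot {A B C : Type*} [Fintype A] [Fintype B] [Fintype C] (F : A → B → C → ℝ) :
    ∑ a, ∑ b, ∑ c, F a b c = ∑ c, ∑ a, ∑ b, F a b c :=
  (Finset.sum_congr rfl fun _ _ => Finset.sum_comm).trans Finset.sum_comm

def condMutInfo' {Ω A B C : Type*} [Fintype Ω] [Fintype A] [Fintype B] [Fintype C]
    (μ : Ω → ℝ) (f : Ω → A) (g : Ω → B) (h : Ω → C) : ℝ :=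
  ent μ (fun ω => (f ω, h ω)) + ent μ (fun ω => (g ω, h ω))
    - ent μ (fun ω => (f ω, g ω, h ω)) - ent μ h

lemma condMutInfo_nonneg' {Ω A B C : Type*} [Fintype Ω] [Fintype A] [Fintype B] [Fintype C]
    (μ : Ω → ℝ) (hμ : ∀ ω, 0 ≤ μ ω) (f : Ω → A) (g : Ω → B) (h : Ω → C) :
    0 ≤ condMutInfo' μ f g h := by
  classical
  set p : A → B → C → ℝ := fun a b c => prob μ (fun ω => (f ω, g ω, h ω)) (a, b, c) with hp
  have hp0 : ∀ a b c, 0 ≤ p a b c := fun a b c => prob_nonneg μ hμ _ _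
  set pfh : A → C → ℝ := fun a c => ∑ b, p a b c with hpfh
  set pgh : B → C → ℝ := fun b c => ∑ a, p a b c with hpgh
  set ph : C → ℝ := fun c => ∑ a, ∑ b, p a b c with hph
  -- marginal identifications
  have m1 : ∀ a c, prob μ (fun ω => (f ω, h ω)) (a, c) = pfh a c := by
    intro a c
    simp only [hpfh, hp, prob]
    rw [Finset.sum_comm]
    refine Finset.sum_congr rfl fun ω _ => ?_
    by_cases h1 : f ω = a <;> by_cases h2 : h ω = c <;>
      simp [Prod.ext_iff, h1, h2]
  have m2 : ∀ b c, prob μ (fun ω => (g ω, h ω)) (b, c) = pgh b c := by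
    intro b c
    simp only [hpgh, hp, prob]
    rw [Finset.sum_comm]
    refine Finset.sum_congr rfl fun ω _ => ?_
    by_cases h1 : g ω = b <;> by_cases h2 : h ω = c <;>
      simp [Prod.ext_iff, h1, h2]
  have m3 : ∀ c, prob μ h c = ph c := by
    intro c
    simp only [hph, hp, prob]
    conv_rhs => enter [2, a]; rw [Finset.sum_comm]
    conv_rhs => rw [Finset.sum_comm]
    refine Finset.sum_congr rfl fun ω _ => ?_
    by_cases h2 : h ω = c <;>
      simp [Prod.ext_iff, h2, ite_and, Finset.sum_ite_eq, Finset.sum_ite_eq']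
  -- nonnegativity and domination facts
  have hpfh0 : ∀ a c, 0 ≤ pfh a c := fun a c => Finset.sum_nonneg fun b _ => hp0 a b c
  have hpgh0 : ∀ b c, 0 ≤ pgh b c := fun b c => Finset.sum_nonneg fun a _ => hp0 a b c
  have hph0 : ∀ c, 0 ≤ ph c := fun c => Finset.sum_nonneg fun a _ => hpfh0 a c
  have hle1 : ∀ a b c, p a b c ≤ pfh a c := fun a b c =>
    Finset.single_le_sum (fun b' _ => hp0 a b' c) (Finset.mem_univ b)
  have hle2 : ∀ a b c, p a b c ≤ pgh b c := fun a b c =>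
    Finset.single_le_sum (fun a' _ => hp0 a' b c) (Finset.mem_univ a)
  have hle3 : ∀ a c, pfh a c ≤ ph c := fun a c =>
    Finset.single_le_sum (fun a' _ => hpfh0 a' c) (Finset.mem_univ a)
  have hsum_gh : ∀ c, ∑ b, pgh b c = ph c := fun c => Finset.sum_comm
  set q : A → B → C → ℝ := fun a b c => if ph c = 0 then 0 else pfh a c * pgh b c / ph c
    with hq
  have hq0 : ∀ a b c, 0 ≤ q a b c := by
    intro a b c
    simp only [hq]
    split
    · exact le_rfl
    · exact div_nonneg (mul_nonneg (hpfh0 a c) (hpgh0 b c)) (hph0 c)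
  -- pointwise Gibbs bound
  have pointwise : ∀ a b c, p a b c - q a b c ≤
      p a b c * Real.log (p a b c) + p a b c * Real.log (ph c)
        - p a b c * Real.log (pfh a c) - p a b c * Real.log (pgh b c) := by
    intro a b c
    rcases eq_or_lt_of_le (hp0 a b c) with hz | hz
    · rw [← hz]
      simp only [zero_sub, zero_mul]
      linarith [hq0 a b c]
    · have h1 : 0 < pfh a c := lt_of_lt_of_le hz (hle1 a b c)
      have h2 : 0 < pgh b c := lt_of_lt_of_le hz (hle2 a b c)
      have h3 : 0 < ph c := lt_of_lt_of_le h1 (hle3 a c)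
      have hqv : q a b c = pfh a c * pgh b c / ph c := if_neg h3.ne'
      have hqpos : 0 < q a b c := by rw [hqv]; exact div_pos (mul_pos h1 h2) h3
      have hkey := log_ineq (le_of_lt hz) (hq0 a b c)
        (fun hh => absurd hh hqpos.ne')
      have hlq : Real.log (q a b c)
          = Real.log (pfh a c) + Real.log (pgh b c) - Real.log (ph c) := by
        rw [hqv, Real.log_div (mul_pos h1 h2).ne' h3.ne', Real.log_mul h1.ne' h2.ne']
      rw [hlq] at hkey
      nlinarith [hkey]
  -- sum of q over a, b
  have hsumq : ∀ c, (∑ a, ∑ b, q a b c) = if ph c = 0 then 0 else ph c := by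
    intro c
    by_cases hc : ph c = 0
    · simp [hq, hc]
    · simp only [hq, if_neg hc]
      have e1 : ∀ a : A, ∑ b, pfh a c * pgh b c / ph c = pfh a c * ph c / ph c := by
        intro a
        rw [← hsum_gh c, Finset.mul_sum, Finset.sum_div]
      rw [Finset.sum_congr rfl fun a _ => e1 a]
      have e2 : ∀ a : A, pfh a c * ph c / ph c = pfh a c := by
        intro a
        rw [mul_div_assoc, div_self hc, mul_one]
      rw [Finset.sum_congr rfl fun a _ => e2 a]
  -- entropies as triple sums
  have eFH : ent μ (fun ω => (f ω, h ω))
      = ∑ a, ∑ b, ∑ c, -(p a b c * Real.log (pfh a c)) := by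
    rw [ent, Fintype.sum_prod_type]
    refine Finset.sum_congr rfl fun a _ => ?_
    rw [Finset.sum_comm]
    refine Finset.sum_congr rfl fun c _ => ?_
    rw [m1 a c, Real.negMulLog, neg_mul, hpfh]
    rw [Finset.sum_mul, ← Finset.sum_neg_distrib]
  have eGH : ent μ (fun ω => (g ω, h ω))
      = ∑ a, ∑ b, ∑ c, -(p a b c * Real.log (pgh b c)) := by
    rw [ent, Fintype.sum_prod_type, ← sum_rot fun b c a => -(p a b c * Real.log (pgh b c))]
    refine Finset.sum_congr rfl fun b _ => ?_
    refine Finset.sum_congr rfl fun c _ => ?_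
    rw [m2 b c, Real.negMulLog, neg_mul, hpgh]
    rw [Finset.sum_mul, ← Finset.sum_neg_distrib]
  have eH : ent μ h = ∑ a, ∑ b, ∑ c, -(p a b c * Real.log (ph c)) := by
    rw [ent, sum_rot fun a b c => -(p a b c * Real.log (ph c))]
    refine Finset.sum_congr rfl fun c _ => ?_
    rw [m3 c, Real.negMulLog, neg_mul]
    conv_lhs => rw [hph]
    rw [Finset.sum_mul, ← Finset.sum_neg_distrib]
    refine Finset.sum_congr rfl fun a _ => ?_
    rw [Finset.sum_mul, ← Finset.sum_neg_distrib]
  have eFGH : ent μ (fun ω => (f ω, g ω, h ω))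
      = ∑ a, ∑ b, ∑ c, Real.negMulLog (p a b c) := by
    rw [ent, Fintype.sum_prod_type]
    exact Finset.sum_congr rfl fun a _ => Fintype.sum_prod_type _
  have key : condMutInfo' μ f g h = ∑ a, ∑ b, ∑ c,
      (p a b c * Real.log (p a b c) + p a b c * Real.log (ph c)
        - p a b c * Real.log (pfh a c) - p a b c * Real.log (pgh b c)) := by
    rw [condMutInfo', eFH, eGH, eFGH, eH]
    simp only [← Finset.sum_add_distrib, ← Finset.sum_sub_distrib]
    refine Finset.sum_congr rfl fun a _ => Finset.sum_congr rfl fun b _ =>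
      Finset.sum_congr rfl fun c _ => ?_
    rw [Real.negMulLog]
    ring
  rw [key]
  have step1 : ∑ a, ∑ b, ∑ c, (p a b c - q a b c) ≤ ∑ a, ∑ b, ∑ c,
      (p a b c * Real.log (p a b c) + p a b c * Real.log (ph c)
        - p a b c * Real.log (pfh a c) - p a b c * Real.log (pgh b c)) :=
    Finset.sum_le_sum fun a _ => Finset.sum_le_sum fun b _ =>
      Finset.sum_le_sum fun c _ => pointwise a b c
  have step2 : (0:ℝ) ≤ ∑ a, ∑ b, ∑ c, (p a b c - q a b c) := by
    have hq_le : ∑ a, ∑ b, ∑ c, q a b c ≤ ∑ a, ∑ b, ∑ c, p a b c := by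
      rw [sum_rot q, sum_rot p]
      refine Finset.sum_le_sum fun c _ => ?_
      rw [hsumq c]
      split
      · exact Finset.sum_nonneg fun a _ => Finset.sum_nonneg fun b _ => hp0 a b c
      · exact le_rfl
    simp only [Finset.sum_sub_distrib]
    linarith [hq_le]
  linarith [step1, step2]

/-- `I(W;Z) + I(U;Y|W) + I(V;Z|W) - I(U;V|W) ≤ I(V,W;Z) + I(U;Y|V,W)`. -/
theorem stmt4 {Ω 𝒰 𝒱 𝒲 𝒴 𝒵 : Type*} [Fintype Ω] [Fintype 𝒰] [Fintype 𝒱] [Fintype 𝒲]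
    [Fintype 𝒴] [Fintype 𝒵] (μ : Ω → ℝ) (hμ : IsPmf μ)
    (U : Ω → 𝒰) (V : Ω → 𝒱) (W : Ω → 𝒲) (Y : Ω → 𝒴) (Z : Ω → 𝒵) :
    mutInfo μ W Z + condMutInfo μ U Y W + condMutInfo μ V Z W - condMutInfo μ U V W
      ≤ mutInfo μ (fun ω => (V ω, W ω)) Z + condMutInfo μ U Y (fun ω => (V ω, W ω)) := by
  obtain ⟨hμ0, -⟩ := hμ
  have hnn : (0:ℝ) ≤ ent μ (fun ω => (U ω, Y ω, W ω)) + ent μ (fun ω => (V ω, Y ω, W ω))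
      - ent μ (fun ω => (U ω, V ω, Y ω, W ω)) - ent μ (fun ω => (Y ω, W ω)) :=
    condMutInfo_nonneg' μ hμ0 U V (fun ω => (Y ω, W ω))
  have e1 : ent μ (fun ω => (Z ω, W ω)) = ent μ (fun ω => (W ω, Z ω)) :=
    ent_comp μ (fun x : 𝒲 × 𝒵 => (x.2, x.1))
      (fun x y h => by simp [Prod.ext_iff] at h ⊢; tauto) _ _ (fun ω => rfl)
  have e2 : ent μ (fun ω => ((V ω, W ω), Z ω)) = ent μ (fun ω => (V ω, Z ω, W ω)) :=
    ent_comp μ (fun x : 𝒱 × 𝒵 × 𝒲 => ((x.1, x.2.2), x.2.1))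
      (fun x y h => by simp [Prod.ext_iff] at h ⊢; tauto) _ _ (fun ω => rfl)
  have e3 : ent μ (fun ω => (Y ω, V ω, W ω)) = ent μ (fun ω => (V ω, Y ω, W ω)) :=
    ent_comp μ (fun x : 𝒱 × 𝒴 × 𝒲 => (x.2.1, x.1, x.2.2))
      (fun x y h => by simp [Prod.ext_iff] at h ⊢; tauto) _ _ (fun ω => rfl)
  have e4 : ent μ (fun ω => (U ω, Y ω, V ω, W ω)) = ent μ (fun ω => (U ω, V ω, Y ω, W ω)) :=
    ent_comp μ (fun x : 𝒰 × 𝒱 × 𝒴 × 𝒲 => (x.1, x.2.2.1, x.2.1, x.2.2.2))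
      (fun x y h => by simp [Prod.ext_iff] at h ⊢; tauto) _ _ (fun ω => rfl)
  simp only [mutInfo, condMutInfo]
  linarith [e1, e2, e3, e4, hnn]

end
end

section
/- Let a, b, c, d ≥ 0 with a + b + c + d = 1. Then H(a+b, c+d) − H((a+b)/3, (a+c)/3, (a+d)/3, (b+c)/3, (b+d)/3, (c+d)/3) ≤ (1/3) H(a+b, c+d) − log 3, where H(p₁,…,p_k) = −∑ pᵢ log pᵢ denotes Shannon entropy of a probability vector. -/
open Real

/-- Subadditivity of `negMulLog`. -/
lemma negMulLog_add_le' {x y : ℝ} (hx : 0 ≤ x) (hy : 0 ≤ y) :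
    negMulLog (x + y) ≤ negMulLog x + negMulLog y := by
  rcases eq_or_lt_of_le hx with h | hx'
  · simp [← h]
  rcases eq_or_lt_of_le hy with h | hy'
  · simp [← h]
  have h1 : log x ≤ log (x + y) := Real.log_le_log hx' (by linarith)
  have h2 : log y ≤ log (x + y) := Real.log_le_log hy' (by linarith)
  have : -(x + y) * log (x + y) = -(x * log (x + y)) + -(y * log (x + y)) := by ring
  simp only [negMulLog, this]
  have hxl : -(x * log (x + y)) ≤ -x * log x := by nlinarith
  have hyl : -(y * log (x + y)) ≤ -y * log y := by nlinarith
  linarith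

/-- Per-atom Gibbs bound. -/
lemma atom_bound {x y z : ℝ} (hx : 0 ≤ x) (hy : 0 ≤ y) (hz : 0 ≤ z) :
    negMulLog x ≤ -(x * log (x + y)) - x * log (x + z) + ((x + y) * (x + z) - x) := by
  rcases eq_or_lt_of_le hx with h | hx'
  · simp [← h]; positivity
  have hxy : 0 < x + y := by linarith
  have hxz : 0 < x + z := by linarith
  have ht : 0 < (x + y) * (x + z) / x := by positivity
  have hlog := Real.log_le_sub_one_of_pos ht
  have hsplit : log ((x + y) * (x + z) / x) = log (x + y) + log (x + z) - log x := by
    rw [Real.log_div (by positivity) (ne_of_gt hx'), Real.log_mul (ne_of_gt hxy) (ne_of_gt hxz)]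
  rw [hsplit] at hlog
  have := mul_le_mul_of_nonneg_left hlog hx
  have hxt : x * ((x + y) * (x + z) / x) = (x + y) * (x + z) := by
    field_simp
  simp only [negMulLog]
  nlinarith [this, hxt]

/-- Gibbs inequality (joint entropy ≤ sum of marginal entropies) for a 2×2 table. -/
lemma gibbs4 {a b c d : ℝ} (ha : 0 ≤ a) (hb : 0 ≤ b) (hc : 0 ≤ c) (hd : 0 ≤ d)
    (hsum : a + b + c + d = 1) :
    negMulLog a + negMulLog b + negMulLog c + negMulLog d ≤
      negMulLog (a + c) + negMulLog (a + d) + negMulLog (b + c) + negMulLog (b + d) := by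
  have Ha := atom_bound ha hc hd
  have Hb := atom_bound hb hd hc
  have Hc := atom_bound hc ha hb
  have Hd := atom_bound hd ha hb
  have hprod : (a + c) * (a + d) + (b + d) * (b + c) + (c + a) * (c + b) + (d + a) * (d + b)
      - (a + b + c + d) = ((a + c) + (b + d)) * ((a + d) + (b + c)) - 1 := by
    nlinarith [hsum]
  have e1 : negMulLog (a + c) = -((a + c) * log (a + c)) := by simp [negMulLog]; ring
  have e2 : negMulLog (a + d) = -((a + d) * log (a + d)) := by simp [negMulLog]; ring
  have e3 : negMulLog (b + c) = -((b + c) * log (b + c)) := by simp [negMulLog]; ring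
  have e4 : negMulLog (b + d) = -((b + d) * log (b + d)) := by simp [negMulLog]; ring
  have hcb : c + b = b + c := by ring
  have hdb : d + b = b + d := by ring
  have hca : c + a = a + c := by ring
  have hda : d + a = a + d := by ring
  rw [hcb, hca] at Hc
  rw [hda, hdb] at Hd
  have hsum2 : ((a + c) + (b + d)) * ((a + d) + (b + c)) = 1 := by nlinarith [hsum]
  rw [e1, e2, e3, e4]
  nlinarith [Ha, Hb, Hc, Hd, hsum2]

lemma negMulLog_third (x : ℝ) :
    negMulLog (x / 3) = (1 / 3) * negMulLog x + x * ((1 / 3) * Real.log 3) := by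
  have : x / 3 = x * (1 / 3) := by ring
  rw [this, Real.negMulLog_mul]
  have h13 : negMulLog (1 / 3 : ℝ) = (1 / 3) * Real.log 3 := by
    simp only [negMulLog]
    rw [show ((1:ℝ)/3) = (3:ℝ)⁻¹ by norm_num, Real.log_inv]
    ring
  rw [h13]

/-- Key entropy inequality for the example channel:
`H(a+b, c+d) − H((a+b)/3, (a+c)/3, (a+d)/3, (b+c)/3, (b+d)/3, (c+d)/3)
  ≤ (1/3) H(a+b, c+d) − log 3`. -/
theorem stmt8 (a b c d : ℝ) (ha : 0 ≤ a) (hb : 0 ≤ b) (hc : 0 ≤ c) (hd : 0 ≤ d)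
    (hsum : a + b + c + d = 1) :
    (negMulLog (a + b) + negMulLog (c + d))
        - (negMulLog ((a + b) / 3) + negMulLog ((a + c) / 3) + negMulLog ((a + d) / 3)
            + negMulLog ((b + c) / 3) + negMulLog ((b + d) / 3) + negMulLog ((c + d) / 3))
      ≤ (1 / 3) * (negMulLog (a + b) + negMulLog (c + d)) - Real.log 3 := by
  rw [negMulLog_third (a + b), negMulLog_third (a + c), negMulLog_third (a + d),
    negMulLog_third (b + c), negMulLog_third (b + d), negMulLog_third (c + d)]
  have h1 := negMulLog_add_le' ha hb
  have h2 := negMulLog_add_le' hc hd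
  have h3 := gibbs4 ha hb hc hd hsum
  have hpsum : (a + b) + (a + c) + (a + d) + (b + c) + (b + d) + (c + d) = 3 := by linarith
  have hlog : (a + b) * ((1 / 3) * Real.log 3) + (a + c) * ((1 / 3) * Real.log 3)
      + (a + d) * ((1 / 3) * Real.log 3) + (b + c) * ((1 / 3) * Real.log 3)
      + (b + d) * ((1 / 3) * Real.log 3) + (c + d) * ((1 / 3) * Real.log 3) = Real.log 3 := by
    have : (a + b) * ((1 / 3) * Real.log 3) + (a + c) * ((1 / 3) * Real.log 3)
        + (a + d) * ((1 / 3) * Real.log 3) + (b + c) * ((1 / 3) * Real.log 3)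
        + (b + d) * ((1 / 3) * Real.log 3) + (c + d) * ((1 / 3) * Real.log 3)
        = ((a + b) + (a + c) + (a + d) + (b + c) + (b + d) + (c + d)) * ((1 / 3) * Real.log 3) := by
      ring
    rw [this, hpsum]; ring
  linarith [h1, h2, h3, hlog]
end
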